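/- arXiv:math/0612582 — 5 statements merged into one kernel-verified Lean document; each statement's English description precedes it below -/
import Mathlib

section
/- Let F = x₀·f_{d-1} + f_d and a ∈ ℙⁿ⁻¹. Both plane hypersurfaces Z(f_{d-1}) and Z(f_d) are singular at a (i.e., ∇f_{d-1}(a) = ∇f_d(a) = 0) if and only if every point of the line L_a is a singular point of Z(F). -/
open MvPolynomial

def SingularAt {K : Type*} [CommRing K] {n : ℕ} (F : MvPolynomial (Fin (n + 1)) K)
    (P : Fin (n + 1) → K) : Prop :=
  eval P F = 0 ∧ ∀ i, eval P (pderiv i F) = 0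

/-!
Write `F = x₀ g + h` and restrict to the point `(s, b)`: then `F = s g(b) + h(b)`,
`∂₀F = g(b)` and `∂_{j+1}F = s ∂_j g(b) + ∂_j h(b)`. Along `b = t a` homogeneity turns each of
these into a power of `t` times its value at `a`, and by Euler's identity `g(a) = h(a) = 0`
whenever the gradients of `g` and `h` vanish at `a`; so every point of the line is singular.
Conversely, `s ∂_j g(a) + ∂_j h(a) = 0` for all `s` forces `∂_j g(a) = ∂_j h(a) = 0`.
-/

namespace MvPolynomial.IsHomogeneous

variable {σ R : Type*} [CommRing R] {φ : MvPolynomial σ R} {m : ℕ}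

theorem eval_smul (hφ : φ.IsHomogeneous m) (t : R) (a : σ → R) :
    eval (t • a) φ = t ^ m * eval a φ := by
  simp only [eval_eq, Finset.mul_sum, Pi.smul_apply, smul_eq_mul, mul_pow,
    Finset.prod_mul_distrib, Finset.prod_pow_eq_pow_sum]
  refine Finset.sum_congr rfl fun u hu => ?_
  rw [← hφ.degree_eq_sum_deg_support hu]
  ring

theorem eval_eq_zero_of_eval_pderiv_eq_zero [Fintype σ] [IsAddTorsionFree R]
    (hφ : φ.IsHomogeneous m) (hm : m ≠ 0) {a : σ → R}
    (h : ∀ i, eval a (pderiv i φ) = 0) : eval a φ = 0 := by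
  have euler := congrArg (eval a) hφ.sum_X_mul_pderiv
  simp only [map_sum, map_mul, eval_X, h, mul_zero, Finset.sum_const_zero, map_nsmul] at euler
  exact (smul_eq_zero.mp euler.symm).resolve_left hm

end MvPolynomial.IsHomogeneous

section Cone

variable {R : Type*} [CommRing R] {n : ℕ} (g h : MvPolynomial (Fin n) R) (s : R) (b : Fin n → R)

theorem eval_cons_rename_succ (q : MvPolynomial (Fin n) R) :
    eval (Fin.cons s b) (rename Fin.succ q) = eval b q := by
  rw [eval_rename, Fin.cons_comp_succ]

theorem pderiv_zero_rename_succ (q : MvPolynomial (Fin n) R) :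
    pderiv (0 : Fin (n + 1)) (rename Fin.succ q) = 0 := by
  refine pderiv_eq_zero_of_notMem_vars fun hmem => ?_
  obtain ⟨j, -, hj⟩ := Finset.mem_image.mp (vars_rename _ _ hmem)
  exact Fin.succ_ne_zero j hj

theorem singularAt_cone_iff :
    SingularAt (X 0 * rename Fin.succ g + rename Fin.succ h) (Fin.cons s b) ↔
      s * eval b g + eval b h = 0 ∧ eval b g = 0 ∧
        ∀ j, s * eval b (pderiv j g) + eval b (pderiv j h) = 0 := by
  simp [SingularAt, Fin.forall_fin_succ, Derivation.leibniz, pderiv_zero_rename_succ,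
    pderiv_rename (Fin.succ_injective n), eval_cons_rename_succ]

end Cone

theorem stmt2_general {K : Type*} [Field K] [CharZero K] {n d : ℕ} (hd : 3 ≤ d)
    (g h : MvPolynomial (Fin n) K)
    (hg : g.IsHomogeneous (d - 1)) (hh : h.IsHomogeneous d)
    (a : Fin n → K) :
    ((∀ j : Fin n, eval a (pderiv j g) = 0) ∧ ∀ j : Fin n, eval a (pderiv j h) = 0) ↔
      ∀ s t : K, SingularAt (X 0 * rename Fin.succ g + rename Fin.succ h)
        (Fin.cons s (fun j => t * a j)) := by
  have hline : ∀ t : K, (fun j => t * a j) = t • a := fun _ => rfl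
  simp only [hline, singularAt_cone_iff]
  constructor
  · rintro ⟨hga, hha⟩ s t
    have hg0 := hg.eval_eq_zero_of_eval_pderiv_eq_zero (by omega) hga
    have hh0 := hh.eval_eq_zero_of_eval_pderiv_eq_zero (by omega) hha
    simp [hg.eval_smul, hh.eval_smul, hg.pderiv.eval_smul, hh.pderiv.eval_smul,
      hga, hha, hg0, hh0]
  · intro hsing
    have hpencil : ∀ s j, s * eval a (pderiv j g) + eval a (pderiv j h) = 0 := fun s j => by
      simpa using (hsing s 1).2.2 j
    have hdh : ∀ j, eval a (pderiv j h) = 0 := fun j => by simpa using hpencil 0 j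
    exact ⟨fun j => by simpa [hdh] using hpencil 1 j, hdh⟩

/-- both `Z(f_{d-1})` and `Z(f_d)` are singular at `a` (all gradients vanish)
iff every point of the line `L_a` is singular on `Z(x₀ f_{d-1} + f_d)`. -/
theorem stmt2 {K : Type*} [Field K] [CharZero K] [IsAlgClosed K] {n d : ℕ} (hd : 3 ≤ d)
    (g h : MvPolynomial (Fin n) K)
    (hg : g.IsHomogeneous (d - 1)) (hh : h.IsHomogeneous d) (hg0 : g ≠ 0)
    (a : Fin n → K) (ha : a ≠ 0) :
    ((∀ j : Fin n, eval a (pderiv j g) = 0) ∧ ∀ j : Fin n, eval a (pderiv j h) = 0) ↔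
      ∀ s t : K, SingularAt (X 0 * rename Fin.succ g + rename Fin.succ h)
        (Fin.cons s (fun j => t * a j)) :=
  stmt2_general hd g h hg hh a
end

section
/- Let f₃ = x₁x₂x₃ + x₂³ + x₃³ and let θ(s,t) = (−s³−t³, s²t, st²) parameterize the nodal cubic Z(f₃) ⊂ ℙ². For a homogeneous quartic f₄ ∈ k[x₁,x₂,x₃], the polynomial f₄(θ(s,t)) (homogeneous of degree 12 in s,t) is identically zero if and only if f₃ divides f₄. -/
/-!
Regard polynomials in `x₁, x₂, x₃` as polynomials in `x₁` over `R = k[x₂, x₃]`. Then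
`f₃ = (x₂x₃) x₁ + (x₂³ + x₃³)` is linear and primitive, as `x₂x₃` and `x₂³ + x₃³` are coprime.
The substitution `φ : R → k[s, t]`, `x₂ ↦ s²t`, `x₃ ↦ st²`, sends distinct monomials to distinct
monomials, so it is injective and extends to the fraction fields; there `f₄(θ) = 0` says that `f₄`
vanishes at the root `-(x₂³ + x₃³)/(x₂x₃)` of `f₃`. Hence `f₃ ∣ f₄` over `Frac R`, and by Gauss's
lemma over `R`.
-/

namespace Polynomial

theorem isPrimitive_C_mul_X_add_C {R : Type*} [CommSemiring R] {a b : R} (hab : IsRelPrime a b) :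
    (C a * X + C b).IsPrimitive := by
  refine isPrimitive_iff_isUnit_of_C_dvd.mpr fun r hr ↦ hab ?_ ?_
  · simpa using (C_dvd_iff_dvd_coeff r _).mp hr 1
  · simpa using (C_dvd_iff_dvd_coeff r _).mp hr 0

theorem C_mul_X_add_C_dvd_of_eval₂_eq_zero {R S : Type*} [CommRing R] [IsDomain R]
    [IsGCDMonoid R] [CommRing S] [IsDomain S] {φ : R →+* S} (hφ : Function.Injective φ)
    {a b : R} (ha : a ≠ 0) (hab : IsRelPrime a b) {y : S} (hy : φ a * y + φ b = 0) {q : R[X]}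
    (hq : q.eval₂ φ y = 0) : C a * X + C b ∣ q := by
  have hj : Function.Injective ((algebraMap S (FractionRing S)).comp φ) :=
    (IsFractionRing.injective S (FractionRing S)).comp hφ
  obtain ⟨Φ, hΦ⟩ : ∃ Φ : FractionRing R →+* FractionRing S,
      Φ.comp (algebraMap R _) = (algebraMap S _).comp φ :=
    ⟨IsFractionRing.lift hj, RingHom.ext (IsFractionRing.lift_algebraMap (K := FractionRing R) hj)⟩
  have ha' : algebraMap R (FractionRing R) a ≠ 0 :=
    (map_ne_zero_iff _ (IsFractionRing.injective R _)).mpr ha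
  set α : FractionRing R := -(algebraMap R _ b / algebraMap R _ a)
  have hΦα : Φ α = algebraMap S _ y := by
    have hΦ' (r : R) : Φ (algebraMap R _ r) = algebraMap S _ (φ r) := RingHom.congr_fun hΦ r
    have hφa : algebraMap S (FractionRing S) (φ a) ≠ 0 := by
      rw [← hΦ']
      exact (map_ne_zero_iff Φ Φ.injective).mpr ha'
    rw [map_neg, map_div₀, hΦ', hΦ', neg_eq_iff_eq_neg, div_eq_iff hφa, ← map_neg, ← map_mul]
    congr 1
    linear_combination hy
  have hroot : (q.map (algebraMap R (FractionRing R))).IsRoot α := by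
    apply Φ.injective
    rw [eval_map, hom_eval₂, hΦ, hΦα, ← hom_eval₂, hq, map_zero, map_zero]
  have hmap : (C a * X + C b).map (algebraMap R (FractionRing R)) =
      C (algebraMap R _ a) * (X - C α) := by
    simp only [α, Polynomial.map_add, Polynomial.map_mul, map_C, map_X, map_neg, sub_neg_eq_add,
      mul_add, ← C_mul, mul_div_cancel₀ _ ha']
  refine (isPrimitive_C_mul_X_add_C hab).dvd_of_fraction_map_dvd_fraction_map
    (K := FractionRing R) ?_
  rw [hmap, (isUnit_C.mpr ha'.isUnit).mul_left_dvd, dvd_iff_isRoot]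
  exact hroot

end Polynomial

open MvPolynomial

namespace MvPolynomial

theorem aeval_eq_eval₂_finSuccEquiv {R S : Type*} [CommSemiring R] [CommSemiring S]
    [Algebra R S] {n : ℕ} (v : Fin (n + 1) → S) (f : MvPolynomial (Fin (n + 1)) R) :
    aeval v f = (finSuccEquiv R n f).eval₂ (aeval (Fin.tail v)).toRingHom (v 0) := by
  induction f using MvPolynomial.induction_on with
  | C a => simp [finSuccEquiv_apply]
  | add p q hp hq => simp [hp, hq]
  | mul_X p i h =>
    simp only [map_mul, aeval_X, h, Polynomial.eval₂_mul]
    congr 1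
    induction i using Fin.cases <;> simp [finSuccEquiv_X_zero, finSuccEquiv_X_succ, Fin.tail]

theorem isRelPrime_X_mul_X_X_pow_add_X_pow {R σ : Type*} [CommRing R] [IsDomain R]
    [UniqueFactorizationMonoid R] {i j : σ} (hij : i ≠ j) {m n : ℕ} (hm : m ≠ 0) (hn : n ≠ 0) :
    IsRelPrime (X i * X j : MvPolynomial σ R) (X i ^ m + X j ^ n) := by
  have hXij : IsRelPrime (X i : MvPolynomial σ R) (X j) :=
    (X_prime (i := i)).irreducible.isRelPrime_iff_not_dvd.mpr (by rwa [X_dvd_X])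
  obtain ⟨c, hc⟩ := dvd_pow_self (X i : MvPolynomial σ R) hm
  obtain ⟨d, hd⟩ := dvd_pow_self (X j : MvPolynomial σ R) hn
  refine .mul_left ?_ ?_
  · rw [hc, add_comm]
    exact hXij.pow_right.add_mul_left_right c
  · rw [hd]
    exact hXij.symm.pow_right.add_mul_left_right d

theorem aeval_monomial_one_injective {R σ τ : Type*} [CommSemiring R] {v : σ → τ →₀ ℕ}
    (hv : Function.Injective (Finsupp.linearCombination ℕ v)) :
    Function.Injective (aeval (R := R) fun i ↦ monomial (v i) (1 : R)) := by
  have hmapDomain : aeval (R := R) (fun i ↦ monomial (v i) (1 : R)) =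
      AddMonoidAlgebra.mapDomainAlgHom R R (Finsupp.linearCombination ℕ v).toAddMonoidHom := by
    refine algHom_ext fun i ↦ ?_
    rw [aeval_X, AddMonoidAlgebra.mapDomainAlgHom_apply, X, ← single_eq_monomial,
      ← single_eq_monomial, AddMonoidAlgebra.mapDomain_single]
    simp
  rw [hmapDomain]
  exact AddMonoidAlgebra.mapDomain_injective hv

theorem aeval_X_sq_mul_X_X_mul_X_sq_injective {R : Type*} [CommSemiring R] :
    Function.Injective (aeval ![X 0 ^ 2 * X 1, X 0 * X 1 ^ 2] :
      MvPolynomial (Fin 2) R →ₐ[R] MvPolynomial (Fin 2) R) := by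
  let v : Fin 2 → Fin 2 →₀ ℕ :=
    ![Finsupp.single 0 2 + Finsupp.single 1 1, Finsupp.single 0 1 + Finsupp.single 1 2]
  have hv : Function.Injective (Finsupp.linearCombination ℕ v) := by
    have hcoord (d : Fin 2 →₀ ℕ) : Finsupp.linearCombination ℕ v d 0 = 2 * d 0 + d 1 ∧
        Finsupp.linearCombination ℕ v d 1 = d 0 + 2 * d 1 := by
      simp [v, Finsupp.linearCombination_apply, Finsupp.sum_fintype, mul_comm]
    intro d e h
    obtain ⟨hd₀, hd₁⟩ := hcoord d
    obtain ⟨he₀, he₁⟩ := hcoord e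
    rw [h] at hd₀ hd₁
    exact Finsupp.ext (Fin.forall_fin_two.mpr ⟨by omega, by omega⟩)
  have hmonomial : ![X 0 ^ 2 * X 1, X 0 * X 1 ^ 2] = fun i ↦ monomial (v i) (1 : R) := by
    ext i : 1
    fin_cases i <;> simp [v, monomial_add_single, ← X_pow_eq_monomial]
  rw [hmonomial]
  exact aeval_monomial_one_injective hv

end MvPolynomial

theorem stmt15_general {K : Type*} [Field K]
    (f₄ : MvPolynomial (Fin 3) K) :
    aeval (![-(X 0 ^ 3) - X 1 ^ 3, X 0 ^ 2 * X 1, X 0 * X 1 ^ 2] :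
        Fin 3 → MvPolynomial (Fin 2) K) f₄ = 0 ↔
      (X 0 * X 1 * X 2 + X 1 ^ 3 + X 2 ^ 3 : MvPolynomial (Fin 3) K) ∣ f₄ := by
  set θ : Fin 3 → MvPolynomial (Fin 2) K := ![-(X 0 ^ 3) - X 1 ^ 3, X 0 ^ 2 * X 1, X 0 * X 1 ^ 2]
  set f₃ : MvPolynomial (Fin 3) K := X 0 * X 1 * X 2 + X 1 ^ 3 + X 2 ^ 3
  have hf₃ : aeval θ f₃ = 0 := by
    simp only [map_add, map_mul, map_pow, aeval_X, θ, f₃,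
      Matrix.cons_val_zero, Matrix.cons_val_one, Matrix.cons_val]
    ring
  refine ⟨fun h ↦ ?_, fun ⟨g, hg⟩ ↦ by rw [hg, map_mul, hf₃, zero_mul]⟩
  have he : finSuccEquiv K 2 f₃ =
      Polynomial.C (X 0 * X 1) * Polynomial.X + Polynomial.C (X 0 ^ 3 + X 1 ^ 3) := by
    simp only [f₃, map_add, map_mul, map_pow, finSuccEquiv_X_zero]
    rw [show (1 : Fin 3) = Fin.succ 0 from rfl, show (2 : Fin 3) = Fin.succ 1 from rfl,
      finSuccEquiv_X_succ, finSuccEquiv_X_succ]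
    ring
  rw [← map_dvd_iff (finSuccEquiv K 2), he]
  refine Polynomial.C_mul_X_add_C_dvd_of_eval₂_eq_zero (φ := (aeval (Fin.tail θ)).toRingHom)
    aeval_X_sq_mul_X_X_mul_X_sq_injective (mul_ne_zero (X_ne_zero 0) (X_ne_zero 1))
    (isRelPrime_X_mul_X_X_pow_add_X_pow zero_ne_one three_ne_zero three_ne_zero) (y := θ 0) ?_ ?_
  · simp only [Fin.tail_vecCons, AlgHom.toRingHom_eq_coe, RingHom.coe_coe, aeval_X,
      map_mul, map_add, map_pow, Matrix.cons_val_zero, Matrix.cons_val_one,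
      Matrix.cons_val_fin_one, θ]
    ring
  · rwa [← aeval_eq_eval₂_finSuccEquiv]

/-- with `f₃ = x₁x₂x₃ + x₂³ + x₃³` and the parameterization
`θ(s,t) = (−s³−t³, s²t, st²)` of the nodal cubic, a homogeneous quartic `f₄` satisfies
`f₄(θ) ≡ 0` iff `f₃` divides `f₄`. -/
theorem stmt15 {K : Type*} [Field K] [CharZero K]
    (f₄ : MvPolynomial (Fin 3) K) (hf₄ : f₄.IsHomogeneous 4) :
    aeval (![-(X 0 ^ 3) - X 1 ^ 3, X 0 ^ 2 * X 1, X 0 * X 1 ^ 2] :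
        Fin 3 → MvPolynomial (Fin 2) K) f₄ = 0 ↔
      (X 0 * X 1 * X 2 + X 1 ^ 3 + X 2 ^ 3 : MvPolynomial (Fin 3) K) ∣ f₄ :=
  stmt15_general f₄
end

section
/- With f₃ = x₁x₂x₃ + x₂³ + x₃³ and θ(s,t) = (−s³−t³, s²t, st²), the image of the linear map sending a homogeneous quartic f₄ ∈ k[x₁,x₂,x₃]₄ (a 15-dimensional space) to f₄(θ) ∈ k[s,t]₁₂ is exactly the set of degree-12 forms b₀s¹² + b₁s¹¹t + ⋯ + b₁₂t¹² with b₀ = b₁₂, and the kernel is {ℓ·f₃ : ℓ a linear form}. -/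
/-!
Write `φ(f) = f(θ)` and let `c_{abc}` be the coefficient of `x₁^a x₂^b x₃^c` in a quartic `f`.
Everything is explicit linear algebra on coefficients. The coefficients of `φ(f)` are 13 linear
forms in the 15 numbers `c_{abc}`, the outer two both equal to `c₄₀₀`: this is the inclusion of the
image, and geometrically it says that `θ(1,0) = θ(0,1) = (-1,0,0)` is the node of `f₃ = 0`.
Conversely, `φ` maps the span of the twelve quartic monomials other than `x₁²x₂x₃, x₁x₂²x₃,
x₁x₂x₃²` onto the forms with `b₀ = b₁₂`, with an explicit inverse `S`, and with
`ℓ = c₂₁₁x₁ + c₁₂₁x₂ + c₁₁₂x₃` every quartic splits as `f = ℓ·f₃ + S(φ(f))`. So `S` provides the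
preimages, and `φ(f) = 0` forces `f = ℓ·f₃`.
-/

open MvPolynomial Finsupp Finset

namespace MvPolynomial

variable {σ R : Type*} [CommSemiring R]

theorem IsHomogeneous.eq_sum_monomial {ι : Type*} {f : MvPolynomial σ R} {n : ℕ}
    (hf : f.IsHomogeneous n) {s : Finset ι} {e : ι → σ →₀ ℕ} (he : Set.InjOn e s)
    (hs : ∀ d : σ →₀ ℕ, d.degree = n → ∃ i ∈ s, e i = d) :
    f = ∑ i ∈ s, monomial (e i) (coeff (e i) f) := by
  classical
  have hsupp : f.support ⊆ s.image e := fun d hd ↦ by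
    obtain ⟨i, hi, rfl⟩ := hs d (hf.degree_eq_sum_deg_support hd).symm
    exact mem_image_of_mem e hi
  calc f = ∑ d ∈ f.support, monomial d (coeff d f) := f.as_sum
    _ = ∑ d ∈ s.image e, monomial d (coeff d f) :=
      sum_subset hsupp fun d _ hd ↦ by rw [notMem_support_iff.1 hd, monomial_zero]
    _ = ∑ i ∈ s, monomial (e i) (coeff (e i) f) := sum_image he

noncomputable def binaryExp (n : ℕ) (i : Fin (n + 1)) : Fin 2 →₀ ℕ :=
  single 0 (n - i) + single 1 (i : ℕ)

theorem binaryExp_injective (n : ℕ) : Function.Injective (binaryExp n) := fun i j h ↦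
  Fin.ext (by simpa [binaryExp] using DFunLike.congr_fun h 1)

theorem monomial_binaryExp (n : ℕ) (i : Fin (n + 1)) (r : R) :
    monomial (binaryExp n i) r = C r * X 0 ^ (n - i) * X 1 ^ (i : ℕ) := by
  simp only [binaryExp, monomial_add_single, C_mul_X_pow_eq_monomial]

theorem binaryExp_zero (n : ℕ) : binaryExp n 0 = single 0 n := by simp [binaryExp]

theorem binaryExp_last (n : ℕ) : binaryExp n (Fin.last n) = single 1 n := by simp [binaryExp]

noncomputable def binaryForm (n : ℕ) (b : Fin (n + 1) → R) : MvPolynomial (Fin 2) R :=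
  ∑ i, monomial (binaryExp n i) (b i)

theorem coeff_binaryForm {n : ℕ} (b : Fin (n + 1) → R) (i : Fin (n + 1)) :
    coeff (binaryExp n i) (binaryForm n b) = b i := by
  classical
  rw [binaryForm, coeff_sum, Finset.sum_eq_single i (fun j _ hj ↦ ?_) (by simp)]
  · simp
  · rw [coeff_monomial, if_neg ((binaryExp_injective n).ne hj)]

theorem IsHomogeneous.eq_binaryForm {n : ℕ} {q : MvPolynomial (Fin 2) R}
    (hq : q.IsHomogeneous n) : q = binaryForm n fun i ↦ coeff (binaryExp n i) q := by
  refine hq.eq_sum_monomial (binaryExp_injective n).injOn fun d hd ↦ ?_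
  rw [degree_eq_sum, Fin.sum_univ_two] at hd
  have h0 : d 0 = n - d 1 := by omega
  refine ⟨⟨d 1, by omega⟩, mem_univ _, ?_⟩
  ext k
  fin_cases k <;> simp [binaryExp, h0]

noncomputable def ternaryExp (a b c : ℕ) : Fin 3 →₀ ℕ := single 0 a + single 1 b + single 2 c

theorem monomial_ternaryExp (a b c : ℕ) (r : R) :
    monomial (ternaryExp a b c) r = C r * X 0 ^ a * X 1 ^ b * X 2 ^ c := by
  simp only [ternaryExp, monomial_add_single, C_mul_X_pow_eq_monomial]

theorem isHomogeneous_monomial_ternaryExp {a b c n : ℕ} (h : a + b + c = n) (r : R) :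
    (monomial (ternaryExp a b c) r).IsHomogeneous n :=
  isHomogeneous_monomial r (by simp [ternaryExp, degree_eq_sum, Fin.sum_univ_three, h])

theorem IsHomogeneous.eq_sum_ternaryExp {n : ℕ} {f : MvPolynomial (Fin 3) R}
    (hf : f.IsHomogeneous n) :
    f = ∑ i ∈ range (n + 1), ∑ j ∈ range (n + 1 - i),
      monomial (ternaryExp i j (n - i - j)) (coeff (ternaryExp i j (n - i - j)) f) := by
  rw [sum_sigma']
  refine hf.eq_sum_monomial (s := (range (n + 1)).sigma fun i ↦ range (n + 1 - i))
    (e := fun p ↦ ternaryExp p.1 p.2 (n - p.1 - p.2)) ?_ fun d hd ↦ ?_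
  · rintro ⟨i, j⟩ - ⟨i', j'⟩ - h
    have h0 : i = i' := by simpa [ternaryExp] using DFunLike.congr_fun h 0
    have h1 : j = j' := by simpa [ternaryExp] using DFunLike.congr_fun h 1
    subst h0 h1
    rfl
  · rw [degree_eq_sum, Fin.sum_univ_three] at hd
    refine ⟨⟨d 0, d 1⟩, ?_, ?_⟩
    · simp only [mem_sigma, mem_range]; omega
    · have h2 : d 2 = n - d 0 - d 1 := by omega
      ext k
      fin_cases k <;> simp [ternaryExp, h2]

end MvPolynomial

section NodalCubic

variable {K : Type*} [CommRing K]

variable (K) in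
noncomputable def nodalCubic : MvPolynomial (Fin 3) K := X 0 * X 1 * X 2 + X 1 ^ 3 + X 2 ^ 3

variable (K) in
noncomputable def nodalParam : Fin 3 → MvPolynomial (Fin 2) K :=
  ![-(X 0 ^ 3) - X 1 ^ 3, X 0 ^ 2 * X 1, X 0 * X 1 ^ 2]

theorem aeval_nodalParam_nodalCubic : aeval (nodalParam K) (nodalCubic K) = 0 := by
  simp only [nodalCubic, nodalParam, map_add, map_mul, map_pow, aeval_X, Matrix.cons_val]
  ring

noncomputable def nodalParamCoeffs (f : MvPolynomial (Fin 3) K) : Fin 13 → K :=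
  let c i j k := coeff (ternaryExp i j k) f
  ![c 4 0 0, -c 3 1 0, c 2 2 0 - c 3 0 1, 4 * c 4 0 0 + c 2 1 1 - c 1 3 0,
    c 0 4 0 - c 1 2 1 + c 2 0 2 - 3 * c 3 1 0, c 0 3 1 - c 1 1 2 + 2 * c 2 2 0 - 3 * c 3 0 1,
    c 0 2 2 - c 1 0 3 - c 1 3 0 + 2 * c 2 1 1 + 6 * c 4 0 0,
    c 0 1 3 - c 1 2 1 + 2 * c 2 0 2 - 3 * c 3 1 0, c 0 0 4 - c 1 1 2 + c 2 2 0 - 3 * c 3 0 1,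
    c 2 1 1 - c 1 0 3 + 4 * c 4 0 0, c 2 0 2 - c 3 1 0, -c 3 0 1, c 4 0 0]

noncomputable def nodalParamPreimage (b : Fin 13 → K) : MvPolynomial (Fin 3) K :=
  monomial (ternaryExp 4 0 0) (b 0) + monomial (ternaryExp 3 1 0) (-b 1) +
    monomial (ternaryExp 3 0 1) (-b 11) + monomial (ternaryExp 2 2 0) (b 2 - b 11) +
    monomial (ternaryExp 2 0 2) (b 10 - b 1) + monomial (ternaryExp 1 3 0) (4 * b 0 - b 3) +
    monomial (ternaryExp 1 0 3) (4 * b 0 - b 9) +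
    monomial (ternaryExp 0 4 0) (b 4 - 2 * b 1 - b 10) +
    monomial (ternaryExp 0 3 1) (b 5 - 2 * b 2 - b 11) +
    monomial (ternaryExp 0 2 2) (2 * b 0 - b 3 + b 6 - b 9) +
    monomial (ternaryExp 0 1 3) (b 7 - b 1 - 2 * b 10) +
    monomial (ternaryExp 0 0 4) (b 8 - b 2 - 2 * b 11)

noncomputable def nodalQuotient (f : MvPolynomial (Fin 3) K) : MvPolynomial (Fin 3) K :=
  C (coeff (ternaryExp 2 1 1) f) * X 0 + C (coeff (ternaryExp 1 2 1) f) * X 1 +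
    C (coeff (ternaryExp 1 1 2) f) * X 2

theorem isHomogeneous_nodalParamPreimage (b : Fin 13 → K) :
    (nodalParamPreimage b).IsHomogeneous 4 := by
  unfold nodalParamPreimage
  repeat' apply IsHomogeneous.add
  all_goals exact isHomogeneous_monomial_ternaryExp rfl _

theorem isHomogeneous_nodalQuotient (f : MvPolynomial (Fin 3) K) :
    (nodalQuotient f).IsHomogeneous 1 :=
  (((isHomogeneous_C_mul_X _ _).add (isHomogeneous_C_mul_X _ _))).add (isHomogeneous_C_mul_X _ _)

theorem aeval_nodalParam_eq_binaryForm {f : MvPolynomial (Fin 3) K} (hf : f.IsHomogeneous 4) :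
    aeval (nodalParam K) f = binaryForm 12 (nodalParamCoeffs f) := by
  conv_lhs => rw [hf.eq_sum_ternaryExp]
  simp only [sum_range_succ, sum_range_zero, Nat.reduceAdd, Nat.reduceSub, zero_add,
    binaryForm, Fin.sum_univ_succ, Fin.sum_univ_zero, Fin.isValue, Fin.reduceSucc,
    monomial_binaryExp, monomial_ternaryExp, nodalParamCoeffs, nodalParam, map_add, map_sub,
    map_mul, map_neg, map_pow, map_ofNat, aeval_X, aeval_C, algebraMap_eq, Matrix.cons_val,
    Fin.val_zero, Fin.val_succ]
  ring

theorem eq_nodalQuotient_mul_nodalCubic_add {f : MvPolynomial (Fin 3) K} (hf : f.IsHomogeneous 4) :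
    f = nodalQuotient f * nodalCubic K + nodalParamPreimage (nodalParamCoeffs f) := by
  conv_lhs => rw [hf.eq_sum_ternaryExp]
  simp only [sum_range_succ, sum_range_zero, Nat.reduceAdd, Nat.reduceSub, zero_add,
    nodalParamCoeffs, nodalParamPreimage, nodalQuotient, nodalCubic, monomial_ternaryExp,
    Matrix.cons_val, map_add, map_sub, map_mul, map_neg, map_ofNat]
  ring

theorem aeval_nodalParam_nodalParamPreimage {b : Fin 13 → K} (hb : b 0 = b 12) :
    aeval (nodalParam K) (nodalParamPreimage b) = binaryForm 12 b := by
  simp only [binaryForm, Fin.sum_univ_succ, Fin.sum_univ_zero, Fin.isValue, Fin.reduceSucc,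
    monomial_binaryExp, monomial_ternaryExp, nodalParamPreimage, nodalParam, map_add, map_sub,
    map_mul, map_neg, map_pow, map_ofNat, aeval_X, aeval_C, algebraMap_eq, Matrix.cons_val,
    Fin.val_zero, Fin.val_succ, Nat.reduceSub, Nat.reduceAdd]
  rw [← hb]
  ring

theorem exists_aeval_nodalParam_eq_iff {q : MvPolynomial (Fin 2) K} (hq : q.IsHomogeneous 12) :
    (∃ f : MvPolynomial (Fin 3) K, f.IsHomogeneous 4 ∧ aeval (nodalParam K) f = q) ↔
      coeff (single 0 12) q = coeff (single 1 12) q := by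
  rw [← binaryExp_zero, ← binaryExp_last]
  constructor
  · rintro ⟨f, hf, rfl⟩
    simp only [aeval_nodalParam_eq_binaryForm hf, coeff_binaryForm]
    rfl
  · intro h
    refine ⟨nodalParamPreimage fun i ↦ coeff (binaryExp 12 i) q,
      isHomogeneous_nodalParamPreimage _, ?_⟩
    rw [aeval_nodalParam_nodalParamPreimage h, ← hq.eq_binaryForm]

theorem aeval_nodalParam_eq_zero_iff {f : MvPolynomial (Fin 3) K} (hf : f.IsHomogeneous 4) :
    aeval (nodalParam K) f = 0 ↔
      ∃ ℓ : MvPolynomial (Fin 3) K, ℓ.IsHomogeneous 1 ∧ f = ℓ * nodalCubic K := by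
  constructor
  · intro h
    have hcoeffs : nodalParamCoeffs f = 0 := funext fun i ↦ by
      rw [← coeff_binaryForm (nodalParamCoeffs f) i, ← aeval_nodalParam_eq_binaryForm hf, h,
        coeff_zero, Pi.zero_apply]
    refine ⟨nodalQuotient f, isHomogeneous_nodalQuotient f, ?_⟩
    conv_lhs => rw [eq_nodalQuotient_mul_nodalCubic_add hf, hcoeffs]
    simp [nodalParamPreimage]
  · rintro ⟨ℓ, -, rfl⟩
    rw [map_mul, aeval_nodalParam_nodalCubic, mul_zero]

end NodalCubic

theorem stmt16_general {K : Type*} [Field K] :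
    (∀ q : MvPolynomial (Fin 2) K, q.IsHomogeneous 12 →
      ((∃ f₄ : MvPolynomial (Fin 3) K, f₄.IsHomogeneous 4 ∧
          aeval (![-(X 0 ^ 3) - X 1 ^ 3, X 0 ^ 2 * X 1, X 0 * X 1 ^ 2] :
            Fin 3 → MvPolynomial (Fin 2) K) f₄ = q) ↔
        coeff (Finsupp.single 0 12) q = coeff (Finsupp.single 1 12) q)) ∧
    (∀ f₄ : MvPolynomial (Fin 3) K, f₄.IsHomogeneous 4 →
      (aeval (![-(X 0 ^ 3) - X 1 ^ 3, X 0 ^ 2 * X 1, X 0 * X 1 ^ 2] :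
          Fin 3 → MvPolynomial (Fin 2) K) f₄ = 0 ↔
        ∃ ℓ : MvPolynomial (Fin 3) K, ℓ.IsHomogeneous 1 ∧
          f₄ = ℓ * (X 0 * X 1 * X 2 + X 1 ^ 3 + X 2 ^ 3))) :=
  ⟨fun _ ↦ exists_aeval_nodalParam_eq_iff, fun _ ↦ aeval_nodalParam_eq_zero_iff⟩

/-- for the nodal cubic `f₃ = x₁x₂x₃ + x₂³ + x₃³` parameterized by
`θ(s,t) = (−s³−t³, s²t, st²)`, the image of the linear map `f₄ ↦ f₄(θ)` from homogeneous
quartics to binary forms of degree 12 consists exactly of the forms whose coefficients of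
`s¹²` and `t¹²` agree, and its kernel is the set of products `ℓ·f₃` with `ℓ` linear. -/
theorem stmt16 {K : Type*} [Field K] [CharZero K] :
    (∀ q : MvPolynomial (Fin 2) K, q.IsHomogeneous 12 →
      ((∃ f₄ : MvPolynomial (Fin 3) K, f₄.IsHomogeneous 4 ∧
          aeval (![-(X 0 ^ 3) - X 1 ^ 3, X 0 ^ 2 * X 1, X 0 * X 1 ^ 2] :
            Fin 3 → MvPolynomial (Fin 2) K) f₄ = q) ↔
        coeff (Finsupp.single 0 12) q = coeff (Finsupp.single 1 12) q)) ∧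
    (∀ f₄ : MvPolynomial (Fin 3) K, f₄.IsHomogeneous 4 →
      (aeval (![-(X 0 ^ 3) - X 1 ^ 3, X 0 ^ 2 * X 1, X 0 * X 1 ^ 2] :
          Fin 3 → MvPolynomial (Fin 2) K) f₄ = 0 ↔
        ∃ ℓ : MvPolynomial (Fin 3) K, ℓ.IsHomogeneous 1 ∧
          f₄ = ℓ * (X 0 * X 1 * X 2 + X 1 ^ 3 + X 2 ^ 3))) :=
  stmt16_general
end

section
/- For a quartic monoid surface F = x₀f₃ + f₄ whose tangent cone f₃ = x₃(x₁x₂ + x₃²) is a conic plus a chord, the pair (λ₁q₁, λ₂q₂) with q₁ = f₄(s,t,0) (degree 4 in s,t) and q₂ = f₄(s², −t², st) (degree 8 in s,t) arises from some quartic f₄ if and only if λ₁b₀ = λ₂c₀ and λ₁b₄ = λ₂c₈, where b₀, b₄ are the coefficients of s⁴, t⁴ in q₁ and c₀, c₈ are the coefficients of s⁸, t⁸ in q₂; moreover the pair (f₄(s,t,0), f₄(s²,−t²,st)) determines f₄ modulo multiples of f₃. -/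
/-!
Write a quartic in its fifteen coefficients (the paper's `x₁, x₂, x₃` are `X 0, X 1, X 2`).
Restricting to the line `x₃ = 0` reads off the five `x₃`-free coefficients; restricting to the
conic gives nine `±1`-combinations of coefficients, and only the extreme ones, at `s⁸` and `t⁸`,
repeat coefficients already seen on the line (those of `x₁⁴` and `x₂⁴`). Solving this triangular
linear system shows that these two coincidences are the only constraints on the image and that the
kernel is spanned by the three multiples `xᵢ · x₃(x₁x₂ + x₃²)`. No division occurs, so the argument
works over any commutative ring.
-/

open MvPolynomial Finset

theorem MvPolynomial.IsHomogeneous.eq_sum_monomial_of_cover {R σ ι : Type*} [CommSemiring R]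
    {p : MvPolynomial σ R} {n : ℕ} (hp : p.IsHomogeneous n) (s : Finset ι) (e : ι → σ →₀ ℕ)
    (he : Set.InjOn e s) (hcover : ∀ d : σ →₀ ℕ, d.degree = n → ∃ i ∈ s, e i = d) :
    p = ∑ i ∈ s, monomial (e i) (coeff (e i) p) := by
  classical
  rw [← sum_image (f := fun d => monomial d (coeff d p)) he]
  conv_lhs => rw [p.as_sum]
  refine sum_subset (fun d hd => ?_) (fun d _ hd => ?_)
  · obtain ⟨i, hi, rfl⟩ :=
      hcover d (by_contra fun h => mem_support_iff.mp hd (hp.coeff_eq_zero h))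
    exact mem_image_of_mem e hi
  · rw [notMem_support_iff.mp hd, monomial_zero]

noncomputable section

namespace ConicPlusChord

variable {R : Type*} [CommRing R]

def binExp (a b : ℕ) : Fin 2 →₀ ℕ := Finsupp.single 0 a + Finsupp.single 1 b

def ternExp (a b c : ℕ) : Fin 3 →₀ ℕ :=
  Finsupp.single 0 a + Finsupp.single 1 b + Finsupp.single 2 c

@[simp] lemma binExp_apply_zero (a b : ℕ) : binExp a b 0 = a := by simp [binExp]
@[simp] lemma binExp_apply_one (a b : ℕ) : binExp a b 1 = b := by simp [binExp]
@[simp] lemma ternExp_apply_zero (a b c : ℕ) : ternExp a b c 0 = a := by simp [ternExp]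
@[simp] lemma ternExp_apply_one (a b c : ℕ) : ternExp a b c 1 = b := by simp [ternExp]
@[simp] lemma ternExp_apply_two (a b c : ℕ) : ternExp a b c 2 = c := by simp [ternExp]

@[simp] lemma binExp_inj {a b p q : ℕ} : binExp a b = binExp p q ↔ a = p ∧ b = q := by
  refine ⟨fun h => ⟨by simpa using DFunLike.congr_fun h 0, by simpa using DFunLike.congr_fun h 1⟩,
    fun ⟨ha, hb⟩ => ha ▸ hb ▸ rfl⟩

lemma binExp_zero_right (a : ℕ) : binExp a 0 = Finsupp.single 0 a := by simp [binExp]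

lemma binExp_zero_left (b : ℕ) : binExp 0 b = Finsupp.single 1 b := by simp [binExp]

lemma binExp_eta (d : Fin 2 →₀ ℕ) : binExp (d 0) (d 1) = d := by
  ext i; fin_cases i <;> simp

lemma ternExp_eta (d : Fin 3 →₀ ℕ) : ternExp (d 0) (d 1) (d 2) = d := by
  ext i; fin_cases i <;> simp

lemma degree_binExp (a b : ℕ) : (binExp a b).degree = a + b := by
  simp [binExp]

lemma degree_ternExp (a b c : ℕ) : (ternExp a b c).degree = a + b + c := by
  simp [ternExp]

lemma monomial_binExp (a b : ℕ) (r : R) :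
    monomial (binExp a b) r = C r * X 0 ^ a * X 1 ^ b := by
  simp [binExp, X_pow_eq_monomial, monomial_mul, C_mul_monomial]

lemma monomial_ternExp (a b c : ℕ) (r : R) :
    monomial (ternExp a b c) r = C r * X 0 ^ a * X 1 ^ b * X 2 ^ c := by
  simp [ternExp, X_pow_eq_monomial, monomial_mul, C_mul_monomial]

lemma eq_sum_binExp_of_isHomogeneous {p : MvPolynomial (Fin 2) R} {n : ℕ}
    (hp : p.IsHomogeneous n) :
    p = ∑ i ∈ range (n + 1), monomial (binExp (n - i) i) (coeff (binExp (n - i) i) p) := by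
  refine hp.eq_sum_monomial_of_cover _ _ (fun i _ j _ h => (binExp_inj.mp h).2) fun d hd => ?_
  rw [← binExp_eta d, degree_binExp] at hd
  refine ⟨d 1, mem_range.mpr (by omega), ?_⟩
  conv_rhs => rw [← binExp_eta d]
  congr 1; omega

lemma eq_sum_ternExp_of_isHomogeneous {p : MvPolynomial (Fin 3) R} {n : ℕ}
    (hp : p.IsHomogeneous n) :
    p = ∑ bc ∈ (range (n + 1) ×ˢ range (n + 1)).filter (fun bc => bc.1 + bc.2 ≤ n),
      monomial (ternExp (n - bc.1 - bc.2) bc.1 bc.2)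
        (coeff (ternExp (n - bc.1 - bc.2) bc.1 bc.2) p) := by
  refine hp.eq_sum_monomial_of_cover _ _ (fun i _ j _ h => Prod.ext ?_ ?_) fun d hd => ?_
  · simpa using DFunLike.congr_fun h 1
  · simpa using DFunLike.congr_fun h 2
  rw [← ternExp_eta d, degree_ternExp] at hd
  refine ⟨(d 1, d 2), by simp only [mem_filter, mem_product, mem_range]; omega, ?_⟩
  conv_rhs => rw [← ternExp_eta d]
  congr 1; omega

lemma eq_quartic_of_isHomogeneous {p : MvPolynomial (Fin 3) R} (hp : p.IsHomogeneous 4) :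
    p = C (p.coeff (ternExp 4 0 0)) * X 0 ^ 4 +
      C (p.coeff (ternExp 3 1 0)) * X 0 ^ 3 * X 1 +
      C (p.coeff (ternExp 2 2 0)) * X 0 ^ 2 * X 1 ^ 2 +
      C (p.coeff (ternExp 1 3 0)) * X 0 * X 1 ^ 3 +
      C (p.coeff (ternExp 0 4 0)) * X 1 ^ 4 +
      C (p.coeff (ternExp 3 0 1)) * X 0 ^ 3 * X 2 +
      C (p.coeff (ternExp 2 1 1)) * X 0 ^ 2 * X 1 * X 2 +
      C (p.coeff (ternExp 1 2 1)) * X 0 * X 1 ^ 2 * X 2 +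
      C (p.coeff (ternExp 0 3 1)) * X 1 ^ 3 * X 2 +
      C (p.coeff (ternExp 2 0 2)) * X 0 ^ 2 * X 2 ^ 2 +
      C (p.coeff (ternExp 1 1 2)) * X 0 * X 1 * X 2 ^ 2 +
      C (p.coeff (ternExp 0 2 2)) * X 1 ^ 2 * X 2 ^ 2 +
      C (p.coeff (ternExp 1 0 3)) * X 0 * X 2 ^ 3 +
      C (p.coeff (ternExp 0 1 3)) * X 1 * X 2 ^ 3 +
      C (p.coeff (ternExp 0 0 4)) * X 2 ^ 4 := by
  conv_lhs => rw [eq_sum_ternExp_of_isHomogeneous hp]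
  simp only [sum_filter, sum_product, sum_range_succ, sum_range_zero]
  norm_num [monomial_ternExp]
  ring

def restrictLine : MvPolynomial (Fin 3) R →ₐ[R] MvPolynomial (Fin 2) R := aeval ![X 0, X 1, 0]

def restrictConic : MvPolynomial (Fin 3) R →ₐ[R] MvPolynomial (Fin 2) R :=
  aeval ![X 0 ^ 2, -(X 1 ^ 2), X 0 * X 1]

def tangentCone : MvPolynomial (Fin 3) R := X 2 * (X 0 * X 1 + X 2 ^ 2)

@[simp] lemma restrictLine_C (r : R) : restrictLine (C r) = C r := aeval_C _ r
@[simp] lemma restrictLine_X_zero : restrictLine (X 0 : MvPolynomial (Fin 3) R) = X 0 := aeval_X _ 0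
@[simp] lemma restrictLine_X_one : restrictLine (X 1 : MvPolynomial (Fin 3) R) = X 1 := aeval_X _ 1
@[simp] lemma restrictLine_X_two : restrictLine (X 2 : MvPolynomial (Fin 3) R) = 0 := aeval_X _ 2

@[simp] lemma restrictConic_C (r : R) : restrictConic (C r) = C r := aeval_C _ r
@[simp] lemma restrictConic_X_zero : restrictConic (X 0 : MvPolynomial (Fin 3) R) = X 0 ^ 2 :=
  aeval_X _ 0
@[simp] lemma restrictConic_X_one : restrictConic (X 1 : MvPolynomial (Fin 3) R) = -(X 1 ^ 2) :=
  aeval_X _ 1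
@[simp] lemma restrictConic_X_two : restrictConic (X 2 : MvPolynomial (Fin 3) R) = X 0 * X 1 :=
  aeval_X _ 2

lemma restrictLine_of_isHomogeneous {f : MvPolynomial (Fin 3) R} (hf : f.IsHomogeneous 4) :
    restrictLine f =
      monomial (binExp 4 0) (coeff (ternExp 4 0 0) f) +
      monomial (binExp 3 1) (coeff (ternExp 3 1 0) f) +
      monomial (binExp 2 2) (coeff (ternExp 2 2 0) f) +
      monomial (binExp 1 3) (coeff (ternExp 1 3 0) f) +
      monomial (binExp 0 4) (coeff (ternExp 0 4 0) f) := by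
  conv_lhs => rw [eq_quartic_of_isHomogeneous hf]
  simp [monomial_binExp]

lemma restrictConic_of_isHomogeneous {f : MvPolynomial (Fin 3) R} (hf : f.IsHomogeneous 4) :
    restrictConic f =
      monomial (binExp 8 0) (coeff (ternExp 4 0 0) f) +
      monomial (binExp 7 1) (coeff (ternExp 3 0 1) f) +
      monomial (binExp 6 2) (coeff (ternExp 2 0 2) f - coeff (ternExp 3 1 0) f) +
      monomial (binExp 5 3) (coeff (ternExp 1 0 3) f - coeff (ternExp 2 1 1) f) +
      monomial (binExp 4 4)
        (coeff (ternExp 0 0 4) f + coeff (ternExp 2 2 0) f - coeff (ternExp 1 1 2) f) +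
      monomial (binExp 3 5) (coeff (ternExp 1 2 1) f - coeff (ternExp 0 1 3) f) +
      monomial (binExp 2 6) (coeff (ternExp 0 2 2) f - coeff (ternExp 1 3 0) f) +
      monomial (binExp 1 7) (-coeff (ternExp 0 3 1) f) +
      monomial (binExp 0 8) (coeff (ternExp 0 4 0) f) := by
  conv_lhs => rw [eq_quartic_of_isHomogeneous hf]
  simp only [map_add, map_mul, map_pow, restrictConic_C, restrictConic_X_zero, restrictConic_X_one,
    restrictConic_X_two, monomial_binExp, map_sub, map_neg]
  ring

lemma restrictLine_tangentCone : restrictLine (tangentCone : MvPolynomial (Fin 3) R) = 0 := by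
  simp [tangentCone]

lemma restrictConic_tangentCone :
    restrictConic (tangentCone : MvPolynomial (Fin 3) R) = 0 := by
  simp only [tangentCone, map_mul, map_add, map_pow, restrictConic_X_zero, restrictConic_X_one,
    restrictConic_X_two]
  ring

lemma exists_mul_tangentCone_of_restrict_eq_zero {d : MvPolynomial (Fin 3) R}
    (hd : d.IsHomogeneous 4) (hline : restrictLine d = 0) (hconic : restrictConic d = 0) :
    ∃ ℓ : MvPolynomial (Fin 3) R, ℓ.IsHomogeneous 1 ∧ d = ℓ * tangentCone := by
  rw [restrictLine_of_isHomogeneous hd] at hline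
  rw [restrictConic_of_isHomogeneous hd] at hconic
  have cl := fun a b => congrArg (coeff (binExp a b)) hline
  have cc := fun a b => congrArg (coeff (binExp a b)) hconic
  simp only [coeff_add, coeff_monomial, binExp_inj, coeff_zero] at cl cc
  have h400 := cl 4 0
  have h310 := cl 3 1
  have h220 := cl 2 2
  have h130 := cl 1 3
  have h040 := cl 0 4
  have h301 := cc 7 1
  have h202 := cc 6 2
  have h103 := cc 5 3
  have h004 := cc 4 4
  have h013 := cc 3 5
  have h022 := cc 2 6
  have h031 := cc 1 7
  norm_num at h400 h310 h220 h130 h040 h301 h202 h103 h004 h013 h022 h031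
  -- `ℓ · f₃ = ℓ · (x₁x₂x₃ + x₃³)`, so `ℓ` is read off at `x₁²x₂x₃`, `x₁x₂²x₃`, `x₁x₂x₃²`.
  refine ⟨C (coeff (ternExp 2 1 1) d) * X 0 + C (coeff (ternExp 1 2 1) d) * X 1 +
    C (coeff (ternExp 1 1 2) d) * X 2, ?_, ?_⟩
  · exact ((isHomogeneous_C_mul_X _ 0).add (isHomogeneous_C_mul_X _ 1)).add
      (isHomogeneous_C_mul_X _ 2)
  · conv_lhs => rw [eq_quartic_of_isHomogeneous hd]
    rw [h310, sub_zero] at h202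
    rw [h130, sub_zero] at h022
    rw [h220, add_zero] at h004
    rw [sub_eq_zero] at h103 h013 h004
    simp only [h400, h310, h220, h130, h040, h301, h202, h022, h031, h103, ← h013, h004, map_zero,
      zero_mul, zero_add, tangentCone]
    ring

lemma exists_restrict_eq_iff {p₁ p₂ : MvPolynomial (Fin 2) R} (hp₁ : p₁.IsHomogeneous 4)
    (hp₂ : p₂.IsHomogeneous 8) :
    (∃ f : MvPolynomial (Fin 3) R,
        f.IsHomogeneous 4 ∧ restrictLine f = p₁ ∧ restrictConic f = p₂) ↔
      coeff (Finsupp.single 0 4) p₁ = coeff (Finsupp.single 0 8) p₂ ∧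
        coeff (Finsupp.single 1 4) p₁ = coeff (Finsupp.single 1 8) p₂ := by
  simp only [← binExp_zero_right, ← binExp_zero_left]
  constructor
  · rintro ⟨f, hf, rfl, rfl⟩
    simp [restrictLine_of_isHomogeneous hf, restrictConic_of_isHomogeneous hf]
  · rintro ⟨h₀, h₁⟩
    set a := fun i j => coeff (binExp i j) p₁
    set b := fun i j => coeff (binExp i j) p₂
    -- `p₁` in `x₁, x₂`, plus `x₃`- and `x₃²`-terms adjusting the interior coefficients on the conic
    refine ⟨monomial (ternExp 4 0 0) (a 4 0) + monomial (ternExp 3 1 0) (a 3 1) +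
      monomial (ternExp 2 2 0) (a 2 2) + monomial (ternExp 1 3 0) (a 1 3) +
      monomial (ternExp 0 4 0) (a 0 4) + monomial (ternExp 3 0 1) (b 7 1) +
      monomial (ternExp 2 1 1) (-b 5 3) + monomial (ternExp 1 2 1) (b 3 5) +
      monomial (ternExp 0 3 1) (-b 1 7) + monomial (ternExp 2 0 2) (b 6 2 + a 3 1) +
      monomial (ternExp 1 1 2) (a 2 2 - b 4 4) + monomial (ternExp 0 2 2) (b 2 6 + a 1 3),
      ?_, ?_, ?_⟩
    · repeat' apply IsHomogeneous.add
      all_goals exact isHomogeneous_monomial _ (degree_ternExp _ _ _)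
    · conv_rhs => rw [eq_sum_binExp_of_isHomogeneous hp₁]
      simp [sum_range_succ, monomial_ternExp, monomial_binExp, a]
    · conv_rhs => rw [eq_sum_binExp_of_isHomogeneous hp₂]
      simp only [sum_range_succ, sum_range_zero, monomial_ternExp, monomial_binExp, map_add,
        map_mul, map_pow, map_sub, map_neg, restrictConic_C, restrictConic_X_zero, restrictConic_X_one,
        restrictConic_X_two, Nat.reduceSub, a, b]
      linear_combination congrArg C h₀ * X 0 ^ 8 + congrArg C h₁ * X 1 ^ 8

lemma restrict_eq_restrict_iff {f f' : MvPolynomial (Fin 3) R} (hf : f.IsHomogeneous 4)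
    (hf' : f'.IsHomogeneous 4) :
    restrictLine f = restrictLine f' ∧ restrictConic f = restrictConic f' ↔
      ∃ ℓ : MvPolynomial (Fin 3) R, ℓ.IsHomogeneous 1 ∧ f - f' = ℓ * tangentCone := by
  simp only [← sub_eq_zero (a := restrictLine f), ← sub_eq_zero (a := restrictConic f),
    ← map_sub]
  refine ⟨fun ⟨hline, hconic⟩ =>
    exists_mul_tangentCone_of_restrict_eq_zero (hf.sub hf') hline hconic, fun ⟨ℓ, _, h⟩ => ?_⟩
  simp [h, restrictLine_tangentCone, restrictConic_tangentCone]

end ConicPlusChord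

end

open MvPolynomial ConicPlusChord in
theorem stmt18_general {K : Type*} [Field K] :
    (∀ (q₁ q₂ : MvPolynomial (Fin 2) K) (lam₁ lam₂ : K), q₁.IsHomogeneous 4 →
      q₂.IsHomogeneous 8 →
      ((∃ f₄ : MvPolynomial (Fin 3) K, f₄.IsHomogeneous 4 ∧
          aeval (![X 0, X 1, 0] : Fin 3 → MvPolynomial (Fin 2) K) f₄ = lam₁ • q₁ ∧
          aeval (![X 0 ^ 2, -(X 1 ^ 2), X 0 * X 1] : Fin 3 → MvPolynomial (Fin 2) K) f₄ =
            lam₂ • q₂) ↔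
        (lam₁ * coeff (Finsupp.single 0 4) q₁ = lam₂ * coeff (Finsupp.single 0 8) q₂ ∧
         lam₁ * coeff (Finsupp.single 1 4) q₁ = lam₂ * coeff (Finsupp.single 1 8) q₂))) ∧
    (∀ f₄ f₄' : MvPolynomial (Fin 3) K, f₄.IsHomogeneous 4 → f₄'.IsHomogeneous 4 →
      ((aeval (![X 0, X 1, 0] : Fin 3 → MvPolynomial (Fin 2) K) f₄ =
          aeval (![X 0, X 1, 0] : Fin 3 → MvPolynomial (Fin 2) K) f₄' ∧
        aeval (![X 0 ^ 2, -(X 1 ^ 2), X 0 * X 1] : Fin 3 → MvPolynomial (Fin 2) K) f₄ =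
          aeval (![X 0 ^ 2, -(X 1 ^ 2), X 0 * X 1] : Fin 3 → MvPolynomial (Fin 2) K) f₄') ↔
        ∃ ℓ : MvPolynomial (Fin 3) K, ℓ.IsHomogeneous 1 ∧
          f₄ - f₄' = ℓ * (X 2 * (X 0 * X 1 + X 2 ^ 2)))) := by
  refine ⟨fun q₁ q₂ lam₁ lam₂ hq₁ hq₂ => ?_, fun f₄ f₄' hf hf' => restrict_eq_restrict_iff hf hf'⟩
  have hp₁ : (lam₁ • q₁).IsHomogeneous 4 := (homogeneousSubmodule (Fin 2) K 4).smul_mem lam₁ hq₁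
  have hp₂ : (lam₂ • q₂).IsHomogeneous 8 := (homogeneousSubmodule (Fin 2) K 8).smul_mem lam₂ hq₂
  have key := exists_restrict_eq_iff hp₁ hp₂
  simp only [coeff_smul, smul_eq_mul] at key
  exact key

/-- for the tangent cone `f₃ = x₃(x₁x₂ + x₃²)` (conic plus chord), with the
line parameterized by `θ₁(s,t) = (s,t,0)` and the conic by `θ₂(s,t) = (s²,−t²,st)`, a pair
`(λ₁q₁, λ₂q₂)` of binary forms of degrees `4` and `8` arises as `(f₄(θ₁), f₄(θ₂))` for some
quartic `f₄` iff `λ₁b₀ = λ₂c₀` and `λ₁b₄ = λ₂c₈`; moreover `(f₄(θ₁), f₄(θ₂))` determines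
`f₄` modulo multiples `ℓ·f₃` of `f₃` by linear forms. -/
theorem stmt18 {K : Type*} [Field K] [CharZero K] :
    (∀ (q₁ q₂ : MvPolynomial (Fin 2) K) (lam₁ lam₂ : K), q₁.IsHomogeneous 4 →
      q₂.IsHomogeneous 8 →
      ((∃ f₄ : MvPolynomial (Fin 3) K, f₄.IsHomogeneous 4 ∧
          aeval (![X 0, X 1, 0] : Fin 3 → MvPolynomial (Fin 2) K) f₄ = lam₁ • q₁ ∧
          aeval (![X 0 ^ 2, -(X 1 ^ 2), X 0 * X 1] : Fin 3 → MvPolynomial (Fin 2) K) f₄ =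
            lam₂ • q₂) ↔
        (lam₁ * coeff (Finsupp.single 0 4) q₁ = lam₂ * coeff (Finsupp.single 0 8) q₂ ∧
         lam₁ * coeff (Finsupp.single 1 4) q₁ = lam₂ * coeff (Finsupp.single 1 8) q₂))) ∧
    (∀ f₄ f₄' : MvPolynomial (Fin 3) K, f₄.IsHomogeneous 4 → f₄'.IsHomogeneous 4 →
      ((aeval (![X 0, X 1, 0] : Fin 3 → MvPolynomial (Fin 2) K) f₄ =
          aeval (![X 0, X 1, 0] : Fin 3 → MvPolynomial (Fin 2) K) f₄' ∧
        aeval (![X 0 ^ 2, -(X 1 ^ 2), X 0 * X 1] : Fin 3 → MvPolynomial (Fin 2) K) f₄ =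
          aeval (![X 0 ^ 2, -(X 1 ^ 2), X 0 * X 1] : Fin 3 → MvPolynomial (Fin 2) K) f₄') ↔
        ∃ ℓ : MvPolynomial (Fin 3) K, ℓ.IsHomogeneous 1 ∧
          f₄ - f₄' = ℓ * (X 2 * (X 0 * X 1 + X 2 ^ 2)))) :=
  stmt18_general
end

section
/- The two real polynomials z³ + xy³ + x³y and z³ + xy³ − x³y are right equivalent over ℂ (related by a complex linear change of coordinates) but not right equivalent over ℝ. -/
/-
Over `ℂ` the diagonal scaling `x ↦ i b x, y ↦ b y, z ↦ z` with `b⁴ = -i` multiplies `xy³` by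
`i b⁴ = 1` and `x³y` by `-i b⁴ = -1`.

Over `ℝ`, restrict a coordinate change `φ` fixing the origin to the line `t ↦ (a t, b t, 0)`.
The `t`-order of `φ(z)³` is a multiple of three and at least four, hence at least six, so the
`t⁴`-coefficient shows that the linear parts `ℓ₀, ℓ₁` of `φ(x), φ(y)` at `(a, b, 0)` satisfy
`ℓ₀ ℓ₁ (ℓ₀² + ℓ₁²) = a b³ - a³ b` identically. The left side vanishes only where `ℓ₀` or `ℓ₁`
does, so one of them vanishes at two of `(1,0), (0,1), (1,1)`, hence identically; but the right
side is `-6` at `(2,1)`.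
-/

open MvPolynomial

/-- Right equivalence over a field `k`: a polynomial change of coordinates fixing the
origin, i.e. a `k`-algebra automorphism of the polynomial ring sending each variable to a
polynomial with zero constant term. -/
def RightEquivPoly (k : Type*) [Field k] (f g : MvPolynomial (Fin 3) k) : Prop :=
  ∃ e : MvPolynomial (Fin 3) k ≃ₐ[k] MvPolynomial (Fin 3) k,
    (∀ i, constantCoeff (e (X i)) = 0) ∧ e f = g

namespace MvPolynomial

section DiagonalScaling

variable {σ R : Type*} [CommRing R]

theorem aeval_scale_comp_aeval_scale_inv (u : σ → Rˣ) :
    (aeval fun i => C (u i : R) * X i).comp (aeval fun i => C ((u⁻¹ i : Rˣ) : R) * X i) =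
      AlgHom.id R (MvPolynomial σ R) := by
  refine algHom_ext fun i => ?_
  rw [AlgHom.comp_apply, aeval_X, map_mul, aeval_C, aeval_X, algebraMap_eq, ← mul_assoc, ← C_mul,
    Pi.inv_apply, Units.inv_mul, C_1, one_mul, AlgHom.id_apply]

noncomputable def diagonalScaling (u : σ → Rˣ) : MvPolynomial σ R ≃ₐ[R] MvPolynomial σ R :=
  AlgEquiv.ofAlgHom _ _ (aeval_scale_comp_aeval_scale_inv u)
    (by simpa using aeval_scale_comp_aeval_scale_inv u⁻¹)

@[simp]
theorem diagonalScaling_X (u : σ → Rˣ) (i : σ) :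
    diagonalScaling u (X i) = C (u i : R) * X i :=
  aeval_X _ i

end DiagonalScaling

section RestrictToLine

variable {σ R : Type*} [CommRing R] (v : σ → R)

open Polynomial in
noncomputable def restrictToLine : MvPolynomial σ R →ₐ[R] R[X] :=
  aeval fun i => Polynomial.C (v i) * Polynomial.X

@[simp]
theorem restrictToLine_X (i : σ) : restrictToLine v (X i) = Polynomial.C (v i) * Polynomial.X :=
  aeval_X _ i

theorem coeff_zero_restrictToLine (p : MvPolynomial σ R) :
    (restrictToLine v p).coeff 0 = constantCoeff p := by
  induction p using MvPolynomial.induction_on with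
  | C r => simp [restrictToLine]
  | add p q hp hq => simp [hp, hq]
  | mul_X p i hp => simp

theorem coeff_one_restrictToLine [Fintype σ] [DecidableEq σ] (p : MvPolynomial σ R) :
    (restrictToLine v p).coeff 1 = ∑ i, v i * coeff (Finsupp.single i 1) p := by
  induction p using MvPolynomial.induction_on with
  | C r => simp [restrictToLine, coeff_C, eq_comm]
  | add p q hp hq => simp [hp, hq, mul_add, Finset.sum_add_distrib]
  | mul_X p j hp =>
    rw [map_mul, restrictToLine_X, ← mul_assoc, Polynomial.coeff_mul_X, Polynomial.coeff_mul_C,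
      coeff_zero_restrictToLine]
    simp [coeff_mul_X', constantCoeff_eq, mul_comm]

end RestrictToLine

end MvPolynomial

namespace Polynomial

theorem eq_of_cube_add_eq_C_mul_X_pow_four {R : Type*} [CommRing R] [IsDomain R]
    {p₀ p₁ p₂ : R[X]} {c : R} (h₀ : p₀.coeff 0 = 0) (h₁ : p₁.coeff 0 = 0) (h₂ : p₂.coeff 0 = 0)
    (h : p₂ ^ 3 + p₀ * p₁ ^ 3 + p₀ ^ 3 * p₁ = C c * X ^ 4) :
    p₀.coeff 1 * p₁.coeff 1 ^ 3 + p₀.coeff 1 ^ 3 * p₁.coeff 1 = c := by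
  obtain ⟨q₀, rfl⟩ := X_dvd_iff.mpr h₀
  obtain ⟨q₁, rfl⟩ := X_dvd_iff.mpr h₁
  obtain ⟨q₂, rfl⟩ := X_dvd_iff.mpr h₂
  have h₃ : q₂ ^ 3 + X * (q₀ * q₁ ^ 3 + q₀ ^ 3 * q₁) = X * C c :=
    mul_left_cancel₀ (pow_ne_zero 3 X_ne_zero) (by linear_combination h)
  have hq₂ : q₂.coeff 0 = 0 := by
    simpa [coeff_zero_eq_eval_zero] using congrArg (eval 0) h₃
  obtain ⟨r, rfl⟩ := X_dvd_iff.mpr hq₂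
  have h₄ : X ^ 2 * r ^ 3 + q₀ * q₁ ^ 3 + q₀ ^ 3 * q₁ = C c :=
    mul_left_cancel₀ X_ne_zero (by linear_combination h₃)
  simpa [coeff_zero_eq_eval_zero] using congrArg (eval 0) h₄

end Polynomial

theorem eq_zero_or_eq_zero_of_mul_cube_add_cube_mul_eq_zero {K : Type*} [CommRing K]
    [LinearOrder K] [IsStrictOrderedRing K] {x y : K} (h : x * y ^ 3 + x ^ 3 * y = 0) :
    x = 0 ∨ y = 0 := by
  have hxy : x * y * (x ^ 2 + y ^ 2) = 0 := by linear_combination h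
  rcases mul_eq_zero.1 hxy with hxy | hsq
  · exact mul_eq_zero.1 hxy
  · left; nlinarith [sq_nonneg x, sq_nonneg y]

theorem not_forall_linear_subst_eq_four_lines {K : Type*} [CommRing K] [LinearOrder K]
    [IsStrictOrderedRing K] (c₀ d₀ c₁ d₁ : K) :
    ¬ ∀ a b : K,
      (a * c₀ + b * d₀) * (a * c₁ + b * d₁) ^ 3 + (a * c₀ + b * d₀) ^ 3 * (a * c₁ + b * d₁) =
        a * b ^ 3 - a ^ 3 * b := by
  intro h
  have h₁₀ := eq_zero_or_eq_zero_of_mul_cube_add_cube_mul_eq_zero (x := c₀) (y := c₁)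
    (by linear_combination h 1 0)
  have h₀₁ := eq_zero_or_eq_zero_of_mul_cube_add_cube_mul_eq_zero (x := d₀) (y := d₁)
    (by linear_combination h 0 1)
  have h₁₁ := eq_zero_or_eq_zero_of_mul_cube_add_cube_mul_eq_zero (x := c₀ + d₀) (y := c₁ + d₁)
    (by linear_combination h 1 1)
  have h₂₁ : 2 * c₀ + d₀ = 0 ∨ 2 * c₁ + d₁ = 0 := by
    rcases h₁₀ with h₁₀ | h₁₀ <;> rcases h₀₁ with h₀₁ | h₀₁ <;> rcases h₁₁ with h₁₁ | h₁₁ <;>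
      first | (left; linarith) | (right; linarith)
  have := h 2 1
  rcases h₂₁ with h₂₁ | h₂₁ <;> simp only [one_mul, h₂₁] at this <;> norm_num at this

theorem linear_coeffs_quartic_eq {R : Type*} [CommRing R] [IsDomain R]
    (φ : MvPolynomial (Fin 3) R →ₐ[R] MvPolynomial (Fin 3) R)
    (hφ₀ : ∀ i, constantCoeff (φ (X i)) = 0)
    (hφ : φ (X 2 ^ 3 + X 0 * X 1 ^ 3 + X 0 ^ 3 * X 1) = X 2 ^ 3 + X 0 * X 1 ^ 3 - X 0 ^ 3 * X 1)
    (a b : R) :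
    (a * coeff (Finsupp.single 0 1) (φ (X 0)) + b * coeff (Finsupp.single 1 1) (φ (X 0))) *
        (a * coeff (Finsupp.single 0 1) (φ (X 1)) + b * coeff (Finsupp.single 1 1) (φ (X 1))) ^ 3 +
      (a * coeff (Finsupp.single 0 1) (φ (X 0)) + b * coeff (Finsupp.single 1 1) (φ (X 0))) ^ 3 *
        (a * coeff (Finsupp.single 0 1) (φ (X 1)) + b * coeff (Finsupp.single 1 1) (φ (X 1))) =
      a * b ^ 3 - a ^ 3 * b := by
  have hline := congrArg (restrictToLine ![a, b, 0]) hφ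
  simp only [map_add, map_sub, map_mul, map_pow] at hline
  have hcoeff₀ i : (restrictToLine ![a, b, 0] (φ (X i))).coeff 0 = 0 := by
    rw [coeff_zero_restrictToLine, hφ₀]
  have := Polynomial.eq_of_cube_add_eq_C_mul_X_pow_four (c := a * b ^ 3 - a ^ 3 * b)
    (hcoeff₀ 0) (hcoeff₀ 1) (hcoeff₀ 2) <| hline.trans <| by
      simp only [restrictToLine_X, Matrix.cons_val, map_zero, map_sub, map_mul, map_pow]
      ring
  simpa [coeff_one_restrictToLine, Fin.sum_univ_three] using this

open Complex in
theorem rightEquivPoly_complex :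
    RightEquivPoly ℂ (X 2 ^ 3 + X 0 * X 1 ^ 3 + X 0 ^ 3 * X 1)
      (X 2 ^ 3 + X 0 * X 1 ^ 3 - X 0 ^ 3 * X 1) := by
  obtain ⟨b, hb⟩ := IsAlgClosed.exists_pow_nat_eq (-I) (by norm_num : 0 < 4)
  have hb₀ : b ≠ 0 := by rintro rfl; norm_num at hb
  let u : Fin 3 → ℂˣ := ![Units.mk0 (I * b) (mul_ne_zero I_ne_zero hb₀), Units.mk0 b hb₀, 1]
  refine ⟨diagonalScaling u, fun i => by simp, ?_⟩
  have hxy3 : (C (I * b) * C b ^ 3 : MvPolynomial (Fin 3) ℂ) = 1 := by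
    rw [← C_pow, ← C_mul, ← C_1]
    congr 1
    linear_combination I * hb - I_mul_I
  have hx3y : (C (I * b) ^ 3 * C b : MvPolynomial (Fin 3) ℂ) = -1 := by
    rw [← C_pow, ← C_mul, ← C_1, ← C_neg]
    congr 1
    linear_combination I ^ 3 * hb - (I * I - 1) * I_mul_I
  simp only [map_add, map_mul, map_pow, diagonalScaling_X]
  rw [show (u 0 : ℂ) = I * b from rfl, show (u 1 : ℂ) = b from rfl, show (u 2 : ℂ) = 1 from rfl,
    C_1, one_mul]
  linear_combination (X 0 * X 1 ^ 3 : MvPolynomial (Fin 3) ℂ) * hxy3 + (X 0 ^ 3 * X 1) * hx3y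

theorem not_rightEquivPoly_real :
    ¬ RightEquivPoly ℝ (X 2 ^ 3 + X 0 * X 1 ^ 3 + X 0 ^ 3 * X 1)
      (X 2 ^ 3 + X 0 * X 1 ^ 3 - X 0 ^ 3 * X 1) := by
  rintro ⟨e, he₀, he⟩
  exact not_forall_linear_subst_eq_four_lines _ _ _ _
    (linear_coeffs_quartic_eq e.toAlgHom he₀ he)

/-- `z³ + xy³ + x³y` and `z³ + xy³ − x³y` are right equivalent over `ℂ`
but not right equivalent over `ℝ`. -/
theorem stmt19 :
    RightEquivPoly ℂ (X 2 ^ 3 + X 0 * X 1 ^ 3 + X 0 ^ 3 * X 1)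
      (X 2 ^ 3 + X 0 * X 1 ^ 3 - X 0 ^ 3 * X 1) ∧
    ¬ RightEquivPoly ℝ (X 2 ^ 3 + X 0 * X 1 ^ 3 + X 0 ^ 3 * X 1)
      (X 2 ^ 3 + X 0 * X 1 ^ 3 - X 0 ^ 3 * X 1) :=
  ⟨rightEquivPoly_complex, not_rightEquivPoly_real⟩
end
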